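/- For x,y ∈ [0,∞) with x ≠ y, the series ∑_{I ∈ 𝒟⁺} |h_I(y)| · |h_{I⁻}(x) − h_{I⁺}(x)| converges, and its sum is at most 4√2 / δ(x,y). -/

import Mathlib

open MeasureTheory Set

/-- The standard dyadic interval `[k·2^{-j}, (k+1)·2^{-j})` contained in `[0,∞)`. -/
def dyadicI (j : ℤ) (k : ℕ) : Set ℝ :=
  Set.Ico ((k : ℝ) * (2:ℝ) ^ (-j)) (((k : ℝ) + 1) * (2:ℝ) ^ (-j))

/-- The dyadic ultrametric on `[0,∞)`: the infimum of the lengths of the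
dyadic intervals containing both points. -/
noncomputable def delta (x y : ℝ) : ℝ :=
  if x = y then 0
  else sInf {L : ℝ | ∃ j : ℤ, ∃ k : ℕ, L = (2:ℝ) ^ (-j) ∧ x ∈ dyadicI j k ∧ y ∈ dyadicI j k}

/-- The Haar function of the dyadic interval `dyadicI j k`. -/
noncomputable def haar (j : ℤ) (k : ℕ) (t : ℝ) : ℝ :=
  Real.sqrt ((2:ℝ) ^ j) *
    ((dyadicI (j+1) (2*k)).indicator (fun _ => (1:ℝ)) t
      - (dyadicI (j+1) (2*k+1)).indicator (fun _ => (1:ℝ)) t)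

/-- Petermichl's kernel on `[0,∞)`. -/
noncomputable def Pker (x y : ℝ) : ℝ :=
  ∑' p : ℤ × ℕ,
    haar p.1 p.2 y * (haar (p.1+1) (2*p.2) x - haar (p.1+1) (2*p.2+1) x)

/-- The elementary building block `Ω_J` associated with the dyadic interval `J = dyadicI j k`. -/
noncomputable def Omega (j : ℤ) (k : ℕ) (x y : ℝ) : ℝ :=
  ((dyadicI (j+1) (2*k)).indicator (fun _ => (1:ℝ)) y
    - (dyadicI (j+1) (2*k+1)).indicator (fun _ => (1:ℝ)) y) *
  (((dyadicI (j+2) (4*k+1)).indicator (fun _ => (1:ℝ)) x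
      + (dyadicI (j+2) (4*k+2)).indicator (fun _ => (1:ℝ)) x)
    - ((dyadicI (j+2) (4*k)).indicator (fun _ => (1:ℝ)) x
      + (dyadicI (j+2) (4*k+3)).indicator (fun _ => (1:ℝ)) x))

/-- The scale truncation `P^{l,m}` of Petermichl's kernel: only the dyadic
intervals with `2^l ≤ |I| < 2^m` are kept. -/
noncomputable def PkerScale (l m : ℤ) (x y : ℝ) : ℝ :=
  ∑' p : ℤ × ℕ,
    if (2:ℝ) ^ l ≤ (2:ℝ) ^ (-p.1) ∧ (2:ℝ) ^ (-p.1) < (2:ℝ) ^ m then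
      haar p.1 p.2 y * (haar (p.1+1) (2*p.2) x - haar (p.1+1) (2*p.2+1) x)
    else 0

/-- The metric truncation `P_{l,m}` of Petermichl's kernel. -/
noncomputable def PkerMetric (l m : ℤ) (x y : ℝ) : ℝ :=
  if (2:ℝ) ^ l ≤ delta x y ∧ delta x y < (2:ℝ) ^ m then Pker x y else 0

/-! Only the dyadic intervals containing both `x` and `y` contribute, and there is at most one
of them at each scale; they all have length at least `δ(x,y)`. A term is at most
`√(2 ^ j) · √(2 ^ (j + 1)) = √2 · 2 ^ j`, so the series is dominated by a geometric series
summing to `2√2 · 2 ^ j₀`, where `2 ^ (-j₀) ≥ δ(x,y)` is the length of the smallest of these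
intervals. -/

lemma mem_dyadicI_iff {j : ℤ} {k : ℕ} {t : ℝ} :
    t ∈ dyadicI j k ↔ 0 ≤ t ∧ ⌊t * 2 ^ j⌋₊ = k := by
  have h2 : (0:ℝ) < 2 ^ j := zpow_pos two_pos j
  rw [dyadicI, mem_Ico, zpow_neg, ← div_eq_mul_inv, ← div_eq_mul_inv, div_le_iff₀ h2,
    lt_div_iff₀ h2]
  constructor
  · rintro ⟨hk, hk'⟩
    have ht : 0 ≤ t := by nlinarith [Nat.cast_nonneg (α := ℝ) k]
    exact ⟨ht, (Nat.floor_eq_iff (by positivity)).2 ⟨hk, hk'⟩⟩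
  · rintro ⟨ht, rfl⟩
    exact ⟨Nat.floor_le (by positivity), Nat.lt_floor_add_one _⟩

lemma eq_of_mem_dyadicI {j : ℤ} {k k' : ℕ} {t : ℝ} (h : t ∈ dyadicI j k)
    (h' : t ∈ dyadicI j k') : k = k' :=
  (mem_dyadicI_iff.1 h).2.symm.trans (mem_dyadicI_iff.1 h').2

lemma dyadicI_succ_subset (j : ℤ) {m k : ℕ} (hm : m / 2 = k) :
    dyadicI (j + 1) m ⊆ dyadicI j k := by
  intro t ht
  rw [mem_dyadicI_iff] at ht ⊢
  refine ⟨ht.1, ?_⟩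
  have hscale : t * 2 ^ j = t * 2 ^ (j + 1) / (2 : ℕ) := by
    rw [zpow_add_one₀ two_ne_zero]
    push_cast
    ring
  rw [hscale, Nat.floor_div_natCast, ht.2, hm]

lemma abs_sub_lt_of_mem_dyadicI {j : ℤ} {k : ℕ} {x y : ℝ} (hx : x ∈ dyadicI j k)
    (hy : y ∈ dyadicI j k) : |x - y| < 2 ^ (-j) := by
  simp only [dyadicI, mem_Ico, add_one_mul] at hx hy
  rw [abs_sub_lt_iff]
  constructor <;> linarith

lemma haar_eq_zero_of_notMem {j : ℤ} {k : ℕ} {t : ℝ} (h : t ∉ dyadicI j k) :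
    haar j k t = 0 := by
  have h₀ : t ∉ dyadicI (j + 1) (2 * k) := fun ht => h (dyadicI_succ_subset j (by omega) ht)
  have h₁ : t ∉ dyadicI (j + 1) (2 * k + 1) := fun ht =>
    h (dyadicI_succ_subset j (by omega) ht)
  simp [haar, indicator_of_notMem h₀, indicator_of_notMem h₁]

lemma abs_haar_le (j : ℤ) (k : ℕ) (t : ℝ) : |haar j k t| ≤ √(2 ^ j) := by
  have hind : ∀ s : Set ℝ, s.indicator (fun _ => (1:ℝ)) t ∈ Icc (0:ℝ) 1 := fun s => by
    by_cases ht : t ∈ s <;> simp [ht]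
  obtain ⟨ha₀, ha₁⟩ := hind (dyadicI (j + 1) (2 * k))
  obtain ⟨hb₀, hb₁⟩ := hind (dyadicI (j + 1) (2 * k + 1))
  rw [haar, abs_mul, abs_of_nonneg (Real.sqrt_nonneg _)]
  refine mul_le_of_le_one_right (Real.sqrt_nonneg _) ?_
  rw [abs_sub_le_iff]
  constructor <;> linarith

/-- At most one of the two children of `dyadicI j k` contains `x`. -/
lemma abs_haar_sub_haar_le (j : ℤ) (k : ℕ) (x : ℝ) :
    |haar (j + 1) (2 * k) x - haar (j + 1) (2 * k + 1) x| ≤ √(2 ^ (j + 1)) := by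
  by_cases hx : x ∈ dyadicI (j + 1) (2 * k)
  · have hx' : x ∉ dyadicI (j + 1) (2 * k + 1) := fun hx' => by
      have := eq_of_mem_dyadicI hx hx'
      omega
    rw [haar_eq_zero_of_notMem hx', sub_zero]
    exact abs_haar_le _ _ _
  · rw [haar_eq_zero_of_notMem hx, zero_sub, abs_neg]
    exact abs_haar_le _ _ _

lemma abs_haar_mul_abs_haar_sub_haar_le (j : ℤ) (k : ℕ) (x y : ℝ) :
    |haar j k y| * |haar (j + 1) (2 * k) x - haar (j + 1) (2 * k + 1) x| ≤ √2 * 2 ^ j := by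
  have h2 : (0:ℝ) < 2 ^ j := zpow_pos two_pos j
  calc |haar j k y| * |haar (j + 1) (2 * k) x - haar (j + 1) (2 * k + 1) x|
      ≤ √(2 ^ j) * √(2 ^ (j + 1)) :=
        mul_le_mul (abs_haar_le _ _ _) (abs_haar_sub_haar_le _ _ _) (abs_nonneg _)
          (Real.sqrt_nonneg _)
    _ = √(2 * (2 ^ j) ^ 2) := by
        rw [← Real.sqrt_mul h2.le, zpow_add_one₀ two_ne_zero]
        ring_nf
    _ = √2 * 2 ^ j := by rw [Real.sqrt_mul zero_le_two, Real.sqrt_sq h2.le]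

lemma mem_dyadicI_of_abs_haar_mul_abs_haar_sub_haar_ne_zero {j : ℤ} {k : ℕ} {x y : ℝ}
    (h : |haar j k y| * |haar (j + 1) (2 * k) x - haar (j + 1) (2 * k + 1) x| ≠ 0) :
    x ∈ dyadicI j k ∧ y ∈ dyadicI j k := by
  constructor
  · by_contra hx
    have h₀ : x ∉ dyadicI (j + 1) (2 * k) := fun hx' =>
      hx (dyadicI_succ_subset j (by omega) hx')
    have h₁ : x ∉ dyadicI (j + 1) (2 * k + 1) := fun hx' =>
      hx (dyadicI_succ_subset j (by omega) hx')
    simp [haar_eq_zero_of_notMem h₀, haar_eq_zero_of_notMem h₁] at h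
  · by_contra hy
    simp [haar_eq_zero_of_notMem hy] at h

lemma delta_nonneg (x y : ℝ) : 0 ≤ delta x y := by
  unfold delta
  split_ifs
  · exact le_rfl
  · exact Real.sInf_nonneg (by rintro L ⟨j, k, rfl, -⟩; exact (zpow_pos two_pos _).le)

lemma abs_sub_le_delta_and_delta_le {x y : ℝ} (hxy : x ≠ y) {j : ℤ} {k : ℕ}
    (hx : x ∈ dyadicI j k) (hy : y ∈ dyadicI j k) :
    |x - y| ≤ delta x y ∧ delta x y ≤ 2 ^ (-j) := by
  rw [delta, if_neg hxy]
  refine ⟨le_csInf ⟨_, j, k, rfl, hx, hy⟩ ?_, csInf_le ⟨|x - y|, ?_⟩ ⟨j, k, rfl, hx, hy⟩⟩ <;>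
    · rintro _ ⟨j', k', rfl, hx', hy'⟩
      exact (abs_sub_lt_of_mem_dyadicI hx' hy').le

def commonScales (x y : ℝ) : Set ℤ := {j | ∃ k, x ∈ dyadicI j k ∧ y ∈ dyadicI j k}

lemma bddAbove_commonScales {x y : ℝ} (hxy : x ≠ y) : BddAbove (commonScales x y) := by
  have hpos : 0 < |x - y| := abs_pos.2 (sub_ne_zero.2 hxy)
  obtain ⟨n, hn⟩ := exists_pow_lt_of_lt_one hpos (by norm_num : (2⁻¹ : ℝ) < 1)
  refine ⟨n, fun j ⟨k, hx, hy⟩ => ?_⟩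
  by_contra! hnj
  have hscale : (2:ℝ) ^ (-j) ≤ 2 ^ (-(n:ℤ)) := zpow_le_zpow_right₀ one_le_two (by omega)
  rw [zpow_neg (2:ℝ) (n:ℤ), zpow_natCast, ← inv_pow] at hscale
  linarith [abs_sub_lt_of_mem_dyadicI hx hy]

lemma summable_and_tsum_le_of_support_graph {f : ℤ × ℕ → ℝ} {κ : ℤ → ℕ} {j₀ : ℤ} {C : ℝ}
    (hf : ∀ p, 0 ≤ f p) (hsupp : ∀ p, f p ≠ 0 → p.2 = κ p.1 ∧ p.1 ≤ j₀)
    (hle : ∀ p, f p ≤ C * 2 ^ p.1) :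
    Summable f ∧ ∑' p, f p ≤ 2 * C * 2 ^ j₀ := by
  let e : ℕ → ℤ × ℕ := fun n => (j₀ - n, κ (j₀ - n))
  have he : Function.Injective e := fun a b hab => by
    have : j₀ - (a:ℤ) = j₀ - b := congrArg Prod.fst hab
    omega
  have hrange : ∀ p ∉ range e, f p = 0 := fun p hp => by
    by_contra hfp
    obtain ⟨hκ, hj⟩ := hsupp p hfp
    have hn : (((j₀ - p.1).toNat : ℕ) : ℤ) = j₀ - p.1 := Int.toNat_of_nonneg (by omega)
    refine hp ⟨(j₀ - p.1).toNat, ?_⟩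
    ext <;> simp [e, hn, hκ]
  have hgeom : HasSum (fun n : ℕ => C * 2 ^ j₀ * (1 / 2 : ℝ) ^ n) (C * 2 ^ j₀ * 2) :=
    hasSum_geometric_two.mul_left _
  have hfe : ∀ n, f (e n) ≤ C * 2 ^ j₀ * (1 / 2 : ℝ) ^ n := fun n => by
    simpa [e, zpow_sub₀, div_eq_mul_inv, mul_assoc] using hle (e n)
  have hsum : Summable (f ∘ e) :=
    Summable.of_nonneg_of_le (fun n => hf _) hfe hgeom.summable
  refine ⟨(he.summable_iff hrange).1 hsum, ?_⟩
  rw [← he.tsum_eq (fun p hp => by_contra fun h => hp (hrange p h)),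
    show 2 * C * 2 ^ j₀ = C * 2 ^ j₀ * 2 by ring, ← hgeom.tsum_eq]
  exact hsum.tsum_le_tsum hfe hgeom.summable

theorem Pker_series_abs_convergent_general (x y : ℝ) (hxy : x ≠ y) :
    Summable (fun p : ℤ × ℕ =>
      |haar p.1 p.2 y| * |haar (p.1+1) (2*p.2) x - haar (p.1+1) (2*p.2+1) x|) ∧
    (∑' p : ℤ × ℕ,
      |haar p.1 p.2 y| * |haar (p.1+1) (2*p.2) x - haar (p.1+1) (2*p.2+1) x|)
      ≤ 4 * Real.sqrt 2 / delta x y := by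
  rcases (commonScales x y).eq_empty_or_nonempty with hS | hS
  · -- only possible when `x < 0` or `y < 0`
    have hzero : ∀ p : ℤ × ℕ,
        |haar p.1 p.2 y| * |haar (p.1+1) (2*p.2) x - haar (p.1+1) (2*p.2+1) x| = 0 :=
      fun p => by_contra fun h =>
        hS.subset ⟨p.2, mem_dyadicI_of_abs_haar_mul_abs_haar_sub_haar_ne_zero h⟩
    simp only [hzero, tsum_zero]
    exact ⟨summable_zero, by have := delta_nonneg x y; positivity⟩
  set j₀ := sSup (commonScales x y)
  have hbdd := bddAbove_commonScales hxy
  obtain ⟨k₀, hxk₀, hyk₀⟩ : j₀ ∈ commonScales x y := Int.csSup_mem hS hbdd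
  obtain ⟨hdelta_lower, hdelta_upper⟩ := abs_sub_le_delta_and_delta_le hxy hxk₀ hyk₀
  have hdelta_pos : 0 < delta x y := (abs_pos.2 (sub_ne_zero.2 hxy)).trans_le hdelta_lower
  obtain ⟨hsum, hle⟩ := summable_and_tsum_le_of_support_graph (κ := fun j => ⌊y * 2 ^ j⌋₊)
    (j₀ := j₀) (fun p => by positivity)
    (fun p hp => by
      obtain ⟨hx, hy⟩ := mem_dyadicI_of_abs_haar_mul_abs_haar_sub_haar_ne_zero hp
      exact ⟨(mem_dyadicI_iff.1 hy).2.symm, le_csSup hbdd ⟨_, hx, hy⟩⟩)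
    (fun p => abs_haar_mul_abs_haar_sub_haar_le p.1 p.2 x y)
  refine ⟨hsum, hle.trans ?_⟩
  calc 2 * √2 * 2 ^ j₀ = 2 * √2 / 2 ^ (-j₀) := by rw [zpow_neg, div_inv_eq_mul]
    _ ≤ 2 * √2 / delta x y := div_le_div_of_nonneg_left (by positivity) hdelta_pos hdelta_upper
    _ ≤ 4 * √2 / delta x y := by gcongr; norm_num

/-- For `x ≠ y` in `[0,∞)`, the series `∑_{I ∈ 𝒟⁺} |h_I(y)|·|h_{I⁻}(x) − h_{I⁺}(x)|`
converges and its sum is at most `4√2/δ(x,y)`. -/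
theorem Pker_series_abs_convergent (x y : ℝ) (hx : 0 ≤ x) (hy : 0 ≤ y) (hxy : x ≠ y) :
    Summable (fun p : ℤ × ℕ =>
      |haar p.1 p.2 y| * |haar (p.1+1) (2*p.2) x - haar (p.1+1) (2*p.2+1) x|) ∧
    (∑' p : ℤ × ℕ,
      |haar p.1 p.2 y| * |haar (p.1+1) (2*p.2) x - haar (p.1+1) (2*p.2+1) x|)
      ≤ 4 * Real.sqrt 2 / delta x y :=
  Pker_series_abs_convergent_general x y hxy
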